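/- Let k be an odd positive integer, S = ℤ/2kℤ, G = Aff(ℤ/2kℤ) the group of maps x ↦ vx + u with v a unit, and K₀ ≤ G the subgroup of affine maps with even translation part u. Then a subgroup H ≤ G has all orbits on S of even cardinality if and only if H is not contained in K₀. -/

import Mathlib

attribute [local instance] Classical.propDecidable


open Pointwise

def affPerm (n : ℕ) (u : ZMod n) (v : (ZMod n)ˣ) : Equiv.Perm (ZMod n) where
  toFun x := v * x + u
  invFun x := (v⁻¹ : (ZMod n)ˣ) * (x - u)
  left_inv x := by simp
  right_inv x := by simp

def Aff (n : ℕ) : Subgroup (Equiv.Perm (ZMod n)) where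
  carrier := {σ | ∃ u v, σ = affPerm n u v}
  one_mem' := ⟨0, 1, Equiv.ext fun x => by simp [affPerm]⟩
  mul_mem' := by
    rintro σ τ ⟨u1, v1, rfl⟩ ⟨u2, v2, rfl⟩
    exact ⟨v1 * u2 + u1, v1 * v2, Equiv.ext fun x => by
      simp [affPerm, Equiv.Perm.mul_apply, mul_add, mul_assoc, add_assoc]⟩
  inv_mem' := by
    rintro σ ⟨u, v, rfl⟩
    refine ⟨-(↑v⁻¹ * u), v⁻¹, Equiv.ext fun x => ?_⟩
    simp [affPerm, Equiv.Perm.inv_def, Equiv.symm, mul_sub, sub_eq_add_neg, mul_add, mul_neg]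

def AffK0 (n : ℕ) : Subgroup (Equiv.Perm (ZMod n)) where
  carrier := {σ | ∃ u v, Even u ∧ σ = affPerm n u v}
  one_mem' := ⟨0, 1, even_iff_two_dvd.mpr (dvd_zero _), Equiv.ext fun x => by simp [affPerm]⟩
  mul_mem' := by
    rintro σ τ ⟨u1, v1, hu1, rfl⟩ ⟨u2, v2, hu2, rfl⟩
    exact ⟨v1 * u2 + u1, v1 * v2, (hu2.mul_left _).add hu1, Equiv.ext fun x => by
      simp [affPerm, Equiv.Perm.mul_apply, mul_add, mul_assoc, add_assoc]⟩
  inv_mem' := by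
    rintro σ ⟨u, v, hu, rfl⟩
    refine ⟨-(↑v⁻¹ * u), v⁻¹, (hu.mul_left _).neg, Equiv.ext fun x => ?_⟩
    simp [affPerm, Equiv.Perm.inv_def, Equiv.symm, mul_sub, sub_eq_add_neg, mul_add, mul_neg]

/-!
Reduction mod 2 is well defined on `ℤ/2kℤ` and sends units to `1`, so an affine map
`x ↦ v x + u` shifts parity by the parity of `u`. If `H ≤ K₀`, the `k` even residues form an
`H`-invariant set of odd size, which cannot be a union of orbits of even size. Otherwise some
element of `H` swaps the two parities and so matches the even points of each orbit with its odd
points.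
-/

theorem Nat.card_eq_two_mul_card_subtype_of_swap {α : Type*} [Finite α] (p : α → Prop)
    (f : α ≃ α) (hf : ∀ x, p (f x) ↔ ¬ p x) : Nat.card α = 2 * Nat.card {x // p x} := by
  have hcompl : Nat.card {x // ¬ p x} = Nat.card {x // p x} :=
    Nat.card_congr (f.subtypeEquiv fun x => (hf x).symm)
  rw [← Nat.card_congr (Equiv.sumCompl p), Nat.card_sum, hcompl, two_mul]

section

open MulAction

variable {G α : Type*} [Group G] [MulAction G α] [Finite α]

theorem MulAction.even_card_orbit_of_swap (p : α → Prop) (g : G)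
    (hg : ∀ x, p (g • x) ↔ ¬ p x) (x : α) : Even (Nat.card (orbit G x)) :=
  ⟨_, (Nat.card_eq_two_mul_card_subtype_of_swap (fun y : orbit G x => p y)
    (toPerm g) fun y => hg y).trans (two_mul _)⟩

theorem MulAction.even_card_of_forall_even_card_orbit
    (h : ∀ x : α, Even (Nat.card (orbit G x))) : Even (Nat.card α) := by
  have := Fintype.ofFinite (orbitRel.Quotient G α)
  rw [Nat.card_congr (selfEquivSigmaOrbits G α), Nat.card_sigma]
  exact Finset.even_sum _ fun ω _ => h ω.out

theorem SubMulAction.even_card_of_forall_even_card_orbit (p : SubMulAction G α)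
    (h : ∀ x : α, Even (Nat.card (orbit G x))) : Even (Nat.card p) :=
  MulAction.even_card_of_forall_even_card_orbit fun x => by
    rw [← Nat.card_image_of_injective Subtype.val_injective, SubMulAction.val_image_orbit]
    exact h x

end

namespace ZMod

variable {n : ℕ}

theorem even_iff_castHom_eq_zero [NeZero n] (hn : 2 ∣ n) (x : ZMod n) :
    Even x ↔ castHom hn (ZMod 2) x = 0 := by
  constructor
  · rintro ⟨r, rfl⟩
    rw [map_add, CharTwo.add_self_eq_zero]
  · intro hx
    rw [← natCast_zmod_val x] at hx ⊢
    rw [map_natCast, natCast_eq_zero_iff_even] at hx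
    exact hx.natCast

theorem castHom_units_eq_one (hn : 2 ∣ n) (v : (ZMod n)ˣ) : castHom hn (ZMod 2) v = 1 := by
  have units_zmod_two : ∀ w : (ZMod 2)ˣ, (w : ZMod 2) = 1 := by decide
  exact units_zmod_two (Units.map (castHom hn (ZMod 2)).toMonoidHom v)

theorem even_add_iff [NeZero n] (hn : 2 ∣ n) (x y : ZMod n) :
    Even (x + y) ↔ (Even x ↔ Even y) := by
  rw [even_iff_castHom_eq_zero hn, even_iff_castHom_eq_zero hn, even_iff_castHom_eq_zero hn,
    map_add]
  generalize castHom hn (ZMod 2) x = a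
  generalize castHom hn (ZMod 2) y = b
  revert a b
  decide

theorem even_units_mul_iff [NeZero n] (hn : 2 ∣ n) (v : (ZMod n)ˣ) (x : ZMod n) :
    Even (v * x) ↔ Even x := by
  rw [even_iff_castHom_eq_zero hn, even_iff_castHom_eq_zero hn, map_mul, castHom_units_eq_one,
    one_mul]

theorem not_even_one [NeZero n] (hn : 2 ∣ n) : ¬ Even (1 : ZMod n) := by
  rw [even_iff_castHom_eq_zero hn, map_one]
  exact one_ne_zero

theorem card_subtype_even (k : ℕ) [NeZero (2 * k)] :
    Nat.card {x : ZMod (2 * k) // Even x} = k := by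
  have hn : 2 ∣ 2 * k := dvd_mul_right 2 k
  have := Nat.card_eq_two_mul_card_subtype_of_swap (fun x : ZMod (2 * k) => Even x)
    (Equiv.addRight 1) fun x => by
      simp only [Equiv.coe_addRight, even_add_iff hn, not_even_one hn, iff_false]
  rw [Nat.card_zmod] at this
  omega

end ZMod

theorem even_affPerm_iff {n : ℕ} [NeZero n] (hn : 2 ∣ n) (u : ZMod n) (v : (ZMod n)ˣ)
    (x : ZMod n) : Even (affPerm n u v x) ↔ (Even x ↔ Even u) :=
  (ZMod.even_add_iff hn _ _).trans (by rw [ZMod.even_units_mul_iff hn])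

theorem even_apply_of_mem_affK0 {n : ℕ} [NeZero n] (hn : 2 ∣ n) {g : Equiv.Perm (ZMod n)}
    (hg : g ∈ AffK0 n) {x : ZMod n} (hx : Even x) : Even (g x) := by
  obtain ⟨u, v, hu, rfl⟩ := hg
  exact (even_affPerm_iff hn u v x).2 (iff_of_true hx hu)

theorem even_apply_iff_of_notMem_affK0 {n : ℕ} [NeZero n] (hn : 2 ∣ n)
    {g : Equiv.Perm (ZMod n)} (hg : g ∈ Aff n) (hg' : g ∉ AffK0 n) (x : ZMod n) :
    Even (g x) ↔ ¬ Even x := by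
  obtain ⟨u, v, rfl⟩ := hg
  have hu : ¬ Even u := fun hu => hg' ⟨u, v, hu, rfl⟩
  rw [even_affPerm_iff hn]
  tauto

theorem stmt_4_general (k : ℕ) (hk : Odd k) [NeZero (2 * k)]
    (H : Subgroup (Equiv.Perm (ZMod (2 * k)))) (hH : H ≤ Aff (2 * k)) :
    (∀ x : ZMod (2 * k), Even (Nat.card (MulAction.orbit H x))) ↔ ¬ H ≤ AffK0 (2 * k) := by
  have hn : 2 ∣ 2 * k := dvd_mul_right 2 k
  constructor
  · intro hall hK
    let evens : SubMulAction H (ZMod (2 * k)) :=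
      { carrier := {x | Even x}
        smul_mem' := fun g _ hx => even_apply_of_mem_affK0 hn (hK g.2) hx }
    have heven : Even (Nat.card evens) := evens.even_card_of_forall_even_card_orbit hall
    rw [show Nat.card evens = k from ZMod.card_subtype_even k] at heven
    exact Nat.not_even_iff_odd.2 hk heven
  · intro hK x
    obtain ⟨g, hgH, hgK⟩ := SetLike.not_le_iff_exists.mp hK
    exact MulAction.even_card_orbit_of_swap (fun y => Even y) (⟨g, hgH⟩ : H)
      (even_apply_iff_of_notMem_affK0 hn (hH hgH) hgK) x

/-- For `k` odd, a subgroup `H ≤ Aff(ℤ/2kℤ)` has all orbits on `ℤ/2kℤ` of even cardinality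
iff `H` is not contained in the even-translation subgroup `K₀`. -/
theorem stmt_4 (k : ℕ) (hk : Odd k) (hk0 : 0 < k) [NeZero (2 * k)]
    (H : Subgroup (Equiv.Perm (ZMod (2 * k)))) (hH : H ≤ Aff (2 * k)) :
    (∀ x : ZMod (2 * k), Even (Nat.card (MulAction.orbit H x))) ↔ ¬ H ≤ AffK0 (2 * k) :=
  stmt_4_general k hk H hH
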